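/- arXiv:1703.06254 — 3 statements merged into one kernel-verified Lean document; each statement's English description precedes it below -/
import Mathlib

section
/- Let N ≥ 1 and 1 > θ₀ > θ₁ > θ₂ > 0 be real numbers, and let η ∈ (0, (1/2)·((1-θ₀)/(N-θ₀))·((θ₁-θ₂)/(N-θ₂))). Let n ≥ 1 be an integer, l > 0 a real number, and a₁,…,aₙ real numbers such that: (1) aᵢ ≤ N·l for all 1 ≤ i ≤ n; (2) ∑_{i=1}^n aᵢ > n·θ₁·l; (3) the number of indices i with aᵢ > θ₀·l is less than η·n. Then there exist at least ((θ₁-θ₂)/(1-θ₂))·n indices i ∈ {1,…,n} such that for every 1 ≤ k ≤ n+1-i, (1/k)·∑_{j=i}^{i+k-1} aⱼ > θ₂·l. -/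
/-!
Truncate the sequence at `θ₀ l` and subtract `θ₂ l`. The resulting terms `c j` are at most
`(θ₀ - θ₂) l`, and their total is still large: by (3) few terms are truncated, and by (1) each
loses at most `(N - θ₀) l`. The combinatorial Pliss lemma bounds `∑ c j` by the sum of `c` over the
Pliss times of `c`, the indices from which every forward partial sum up to `n` is positive: a
non-Pliss time starts a block with non-positive sum, and skipping that block can only increase the
total. So there are at least `∑ c j / ((θ₀ - θ₂) l)` Pliss times of `c`. They are Pliss times of
`a` for the threshold `θ₂ l` because `c ≤ a - θ₂ l`, and the bound on `η` turns this count into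
`(θ₁ - θ₂)/(1 - θ₂) · n`.
-/

open scoped Classical

open Finset

theorem sum_Icc_add_sum_Icc_add_one {M : Type*} [AddCommMonoid M] (f : ℕ → M) {s m n : ℕ}
    (hsm : s ≤ m + 1) (hmn : m ≤ n) :
    ∑ j ∈ Icc s m, f j + ∑ j ∈ Icc (m + 1) n, f j = ∑ j ∈ Icc s n, f j := by
  simp only [← Ico_add_one_right_eq_Icc]
  exact sum_Ico_consecutive f hsm (by omega)

def IsPlissTime {M : Type*} [AddCommMonoid M] [LT M] (c : ℕ → M) (n i : ℕ) : Prop :=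
  ∀ m, i ≤ m → m ≤ n → 0 < ∑ j ∈ Icc i m, c j

theorem IsPlissTime.pos {M : Type*} [AddCommMonoid M] [LT M] {c : ℕ → M} {n i : ℕ}
    (h : IsPlissTime c n i) (hin : i ≤ n) : 0 < c i := by
  simpa using h i le_rfl hin

theorem sum_Icc_le_sum_filter_isPlissTime {M : Type*} [AddCommMonoid M] [LinearOrder M]
    [IsOrderedAddMonoid M] (c : ℕ → M) (n s : ℕ) :
    ∑ j ∈ Icc s n, c j ≤ ∑ i ∈ Icc s n with IsPlissTime c n i, c i := by
  by_cases hsn : s ≤ n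
  swap
  · simp [Icc_eq_empty_of_lt (not_le.1 hsn)]
  by_cases hs : IsPlissTime c n s
  · rw [← insert_Icc_add_one_left_eq_Icc hsn, filter_insert, if_pos hs,
      sum_insert (by simp), sum_insert (by simp)]
    exact add_le_add_right (sum_Icc_le_sum_filter_isPlissTime c n (s + 1)) _
  · obtain ⟨m, hsm, hmn, hneg⟩ : ∃ m, s ≤ m ∧ m ≤ n ∧ ∑ j ∈ Icc s m, c j ≤ 0 := by
      simpa [IsPlissTime] using hs
    calc ∑ j ∈ Icc s n, c j
        = ∑ j ∈ Icc s m, c j + ∑ j ∈ Icc (m + 1) n, c j :=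
          (sum_Icc_add_sum_Icc_add_one c (by omega) hmn).symm
      _ ≤ ∑ j ∈ Icc (m + 1) n, c j := add_le_of_nonpos_left hneg
      _ ≤ ∑ i ∈ Icc (m + 1) n with IsPlissTime c n i, c i :=
          sum_Icc_le_sum_filter_isPlissTime c n (m + 1)
      _ ≤ ∑ i ∈ Icc s n with IsPlissTime c n i, c i := by
          refine sum_le_sum_of_subset_of_nonneg
            (filter_subset_filter _ (Icc_subset_Icc (by omega) le_rfl)) fun i hi _ => ?_
          rw [mem_filter, mem_Icc] at hi
          exact (hi.2.pos hi.1.2).le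
termination_by n + 1 - s

theorem sum_Icc_le_card_mul_of_isPlissTime (c : ℕ → ℝ) (n s : ℕ) {A : ℝ}
    (hA : ∀ j ∈ Icc s n, c j ≤ A) :
    ∑ j ∈ Icc s n, c j ≤ #{i ∈ Icc s n | IsPlissTime c n i} * A := by
  refine (sum_Icc_le_sum_filter_isPlissTime c n s).trans ?_
  simpa using sum_le_card_nsmul _ _ A fun i hi => hA i (mem_filter.1 hi).1

theorem IsPlissTime.lt_average {c a : ℕ → ℝ} {θ : ℝ} {n i k : ℕ} (h : IsPlissTime c n i)
    (hca : ∀ j, c j ≤ a j - θ) (hk : 1 ≤ k) (hkn : k ≤ n + 1 - i) :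
    θ < 1 / (k : ℝ) * ∑ j ∈ Icc i (i + k - 1), a j := by
  have hcard : #(Icc i (i + k - 1)) = k := by simp only [Nat.card_Icc]; omega
  have hc : ∑ j ∈ Icc i (i + k - 1), c j ≤ ∑ j ∈ Icc i (i + k - 1), a j - k * θ := by
    refine (sum_le_sum fun j _ => hca j).trans_eq ?_
    rw [sum_sub_distrib, sum_const, hcard, nsmul_eq_mul]
  rw [one_div, inv_mul_eq_div, lt_div_iff₀ (by exact_mod_cast hk)]
  linarith [h (i + k - 1) (by omega) (by omega)]

theorem sum_le_sum_min_add_card_mul {ι : Type*} (s : Finset ι) (f : ι → ℝ) {t M : ℝ}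
    (hM : ∀ i ∈ s, f i ≤ M) :
    ∑ i ∈ s, f i ≤ ∑ i ∈ s, min (f i) t + #{i ∈ s | t < f i} * (M - t) := by
  have hf : ∀ i ∈ s, f i ≤ min (f i) t + if t < f i then M - t else 0 := by
    intro i hi
    split_ifs with h
    · rw [min_eq_right h.le]; linarith [hM i hi]
    · rw [min_eq_left (not_lt.1 h), add_zero]
  refine (sum_le_sum hf).trans_eq ?_
  rw [sum_add_distrib, ← sum_filter, sum_const, nsmul_eq_mul]

theorem pliss_eta_mul_le {N θ₀ θ₁ θ₂ η : ℝ} (hN : 1 ≤ N) (hθ₀1 : θ₀ < 1) (hθ₁₀ : θ₁ < θ₀)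
    (hθ₂₁ : θ₂ < θ₁) (hη : η < (1/2) * ((1 - θ₀)/(N - θ₀)) * ((θ₁ - θ₂)/(N - θ₂))) :
    η * (N - θ₀) * (1 - θ₂) ≤ (θ₁ - θ₂) * (1 - θ₀) := by
  have hNθ₀ : 0 < N - θ₀ := by linarith
  have hNθ₂ : 0 < N - θ₂ := by linarith
  rw [mul_assoc, div_mul_div_comm, mul_div_assoc', lt_div_iff₀ (by positivity)] at hη
  nlinarith [mul_pos (by linarith : (0:ℝ) < 1 - θ₀) (by linarith : (0:ℝ) < θ₁ - θ₂)]

theorem pliss_variant_general (N θ₀ θ₁ θ₂ η l : ℝ) (n : ℕ) (a : ℕ → ℝ)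
    (hN : 1 ≤ N) (hθ₀1 : θ₀ < 1) (hθ₁₀ : θ₁ < θ₀) (hθ₂₁ : θ₂ < θ₁)
    (hη : η < (1/2) * ((1 - θ₀)/(N - θ₀)) * ((θ₁ - θ₂)/(N - θ₂)))
    (hl : 0 < l)
    (h1 : ∀ i ∈ Finset.Icc 1 n, a i ≤ N * l)
    (h2 : (n : ℝ) * θ₁ * l < ∑ i ∈ Finset.Icc 1 n, a i)
    (h3 : (((Finset.Icc 1 n).filter (fun i => θ₀ * l < a i)).card : ℝ) < η * n) :
    ((θ₁ - θ₂)/(1 - θ₂)) * n ≤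
      (((Finset.Icc 1 n).filter (fun i => ∀ k : ℕ, 1 ≤ k → k ≤ n + 1 - i →
        θ₂ * l < (1 / (k : ℝ)) * ∑ j ∈ Finset.Icc i (i + k - 1), a j)).card : ℝ) := by
  set c : ℕ → ℝ := fun j => min (a j) (θ₀ * l) - θ₂ * l
  set K : ℝ := ↑(#{i ∈ Icc 1 n | IsPlissTime c n i})
  have htrunc := sum_le_sum_min_add_card_mul (Icc 1 n) a (t := θ₀ * l) h1
  set F : ℝ := ↑(#{i ∈ Icc 1 n | θ₀ * l < a i})
  have hpliss : ∑ j ∈ Icc 1 n, c j ≤ K * ((θ₀ - θ₂) * l) :=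
    sum_Icc_le_card_mul_of_isPlissTime c n 1 fun j _ => by
      simp only [c, sub_mul]; linarith [min_le_right (a j) (θ₀ * l)]
  have hsum_c : ∑ j ∈ Icc 1 n, c j = ∑ j ∈ Icc 1 n, min (a j) (θ₀ * l) - n * (θ₂ * l) := by
    simp only [c, sum_sub_distrib, sum_const, Nat.card_Icc, nsmul_eq_mul, add_tsub_cancel_right]
  have hK : (n * (θ₁ - θ₂) - F * (N - θ₀)) * l < K * (θ₀ - θ₂) * l := by linarith
  have hF : F * (N - θ₀) < η * n * (N - θ₀) := mul_lt_mul_of_pos_right h3 (by linarith)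
  have hη' := pliss_eta_mul_le hN hθ₀1 hθ₁₀ hθ₂₁ hη
  refine le_trans ?_ <| Nat.cast_le.2 <| card_le_card <| monotone_filter_right _
    fun i _ (hi : IsPlissTime c n i) k hk hkn =>
      hi.lt_average (fun j => sub_le_sub_right (min_le_left _ _) _) hk hkn
  rw [div_mul_eq_mul_div, div_le_iff₀ (by linarith)]
  nlinarith [lt_of_mul_lt_mul_right hK hl.le]

/-- A variant of the Pliss lemma. -/
theorem pliss_variant (N θ₀ θ₁ θ₂ η l : ℝ) (n : ℕ) (a : ℕ → ℝ)
    (hN : 1 ≤ N) (hθ₀1 : θ₀ < 1) (hθ₁₀ : θ₁ < θ₀) (hθ₂₁ : θ₂ < θ₁) (hθ₂ : 0 < θ₂)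
    (hη0 : 0 < η)
    (hη : η < (1/2) * ((1 - θ₀)/(N - θ₀)) * ((θ₁ - θ₂)/(N - θ₂)))
    (hn : 1 ≤ n) (hl : 0 < l)
    (h1 : ∀ i ∈ Finset.Icc 1 n, a i ≤ N * l)
    (h2 : (n : ℝ) * θ₁ * l < ∑ i ∈ Finset.Icc 1 n, a i)
    (h3 : (((Finset.Icc 1 n).filter (fun i => θ₀ * l < a i)).card : ℝ) < η * n) :
    ((θ₁ - θ₂)/(1 - θ₂)) * n ≤
      (((Finset.Icc 1 n).filter (fun i => ∀ k : ℕ, 1 ≤ k → k ≤ n + 1 - i →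
        θ₂ * l < (1 / (k : ℝ)) * ∑ j ∈ Finset.Icc i (i + k - 1), a j)).card : ℝ) :=
  pliss_variant_general N θ₀ θ₁ θ₂ η l n a hN hθ₀1 hθ₁₀ hθ₂₁ hη hl h1 h2 h3
end

section
/- Under the hypotheses of the Pliss variant (aᵢ ≤ N·l for all i, ∑aᵢ > n·θ₁·l, fewer than η·n indices with aᵢ > θ₀·l, where η < (1/2)·((1-θ₀)/(N-θ₀))·((θ₁-θ₂)/(N-θ₂)) and l > 0), if I ⊆ {1,…,n} is nonempty and satisfies (1/|I|)·∑_{i∈I} aᵢ ≤ θ₂·l, then the average over the complement satisfies (1/|Iᶜ|)·∑_{i∈Iᶜ} aᵢ ≤ l. -/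
/-!
Since `I` carries average at most `θ₂ l` while the whole sum exceeds `n θ₁ l` and every term is at
most `N l`, the complement must have more than `n (θ₁ - θ₂) / (N - θ₂)` elements. On the
complement fewer than `η n` terms exceed `θ₀ l`, each by at most `(N - θ₀) l`; the choice of `η`
makes this total excess at most `(1 - θ₀) l` per element of the complement, so the average there
is at most `θ₀ l + (1 - θ₀) l = l`.
-/

open Finset

namespace Finset

variable {ι : Type*} {s t : Finset ι} {f : ι → ℝ}

lemma sum_le_card_mul_of_inv_card_mul_sum_le {c : ℝ} (h : (#s : ℝ)⁻¹ * ∑ i ∈ s, f i ≤ c) :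
    ∑ i ∈ s, f i ≤ #s * c := by
  rcases s.eq_empty_or_nonempty with rfl | hs
  · simp
  · rwa [inv_mul_le_iff₀ (by exact_mod_cast hs.card_pos)] at h

lemma inv_card_mul_sum_le_of_sum_le_card_mul {c : ℝ} (hc : 0 ≤ c)
    (h : ∑ i ∈ s, f i ≤ #s * c) : (#s : ℝ)⁻¹ * ∑ i ∈ s, f i ≤ c := by
  rcases s.eq_empty_or_nonempty with rfl | hs
  · simpa
  · rwa [inv_mul_le_iff₀ (by exact_mod_cast hs.card_pos)]

lemma sum_le_card_mul_add_card_filter_lt_mul {M t : ℝ} (hf : ∀ i ∈ s, f i ≤ M) :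
    ∑ i ∈ s, f i ≤ #s * t + #(s.filter (t < f ·)) * (M - t) := by
  have hbig : ∑ i ∈ s.filter (t < f ·), f i ≤ #(s.filter (t < f ·)) * M := by
    simpa using sum_le_card_nsmul (s.filter (t < f ·)) f M fun i hi ↦ hf i (mem_filter.1 hi).1
  have hsmall : ∑ i ∈ s.filter (¬ t < f ·), f i ≤ #(s.filter (¬ t < f ·)) * t := by
    simpa using sum_le_card_nsmul (s.filter (¬ t < f ·)) f t fun i hi ↦ not_lt.1 (mem_filter.1 hi).2
  have hcard : (#(s.filter (t < f ·)) : ℝ) + #(s.filter (¬ t < f ·)) = #s := by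
    exact_mod_cast card_filter_add_card_filter_not (s := s) (t < f ·)
  rw [← sum_filter_add_sum_filter_not s (t < f ·), ← hcard]
  linarith

lemma card_mul_sub_lt_card_sdiff_mul_sub [DecidableEq ι] {M c d : ℝ} (hts : t ⊆ s)
    (hf : ∀ i ∈ s, f i ≤ M)
    (ht : ∑ i ∈ t, f i ≤ #t * c) (hs : #s * d < ∑ i ∈ s, f i) :
    #s * (d - c) < #(s \ t) * (M - c) := by
  have hrest : ∑ i ∈ s \ t, f i ≤ #(s \ t) * M := by
    simpa using sum_le_card_nsmul _ _ _ fun i hi ↦ hf i (mem_sdiff.1 hi).1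
  have hcard : (#(s \ t) : ℝ) = #s - #t := by
    rw [card_sdiff_of_subset hts, Nat.cast_sub (card_le_card hts)]
  rw [← sum_sdiff hts] at hs
  rw [hcard] at hrest ⊢
  linarith

end Finset

lemma pliss_excess_le {N θ₀ θ₁ θ₂ η n m : ℝ} (hθ₀ : θ₀ < 1) (hNθ₀ : θ₀ < N) (hNθ₂ : θ₂ < N)
    (hn : 0 ≤ n) (hm : 0 ≤ m)
    (hη : η < (1/2) * ((1 - θ₀)/(N - θ₀)) * ((θ₁ - θ₂)/(N - θ₂)))
    (hmn : n * (θ₁ - θ₂) < m * (N - θ₂)) :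
    η * n * (N - θ₀) ≤ (1 - θ₀) * m := by
  have hfrac : n * ((θ₁ - θ₂) / (N - θ₂)) ≤ m := by
    rw [mul_div_assoc', div_le_iff₀ (by linarith)]
    exact hmn.le
  have hηN : η * (N - θ₀) ≤ (1/2) * (1 - θ₀) * ((θ₁ - θ₂) / (N - θ₂)) := by
    rw [show (1/2) * ((1 - θ₀)/(N - θ₀)) * ((θ₁ - θ₂)/(N - θ₂))
        = (1/2) * (1 - θ₀) * ((θ₁ - θ₂) / (N - θ₂)) / (N - θ₀) by ring,
      lt_div_iff₀ (by linarith)] at hη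
    exact hη.le
  calc η * n * (N - θ₀) = n * (η * (N - θ₀)) := by ring
    _ ≤ n * ((1/2) * (1 - θ₀) * ((θ₁ - θ₂) / (N - θ₂))) := by gcongr
    _ = (1/2) * (1 - θ₀) * (n * ((θ₁ - θ₂) / (N - θ₂))) := by ring
    _ ≤ (1/2) * (1 - θ₀) * m := by gcongr
    _ ≤ (1 - θ₀) * m := by nlinarith

theorem pliss_improved_average_general (N θ₀ θ₁ θ₂ η l : ℝ) (n : ℕ) (a : ℕ → ℝ)
    (hN : 1 ≤ N) (hθ₀1 : θ₀ < 1) (hθ₁₀ : θ₁ < θ₀) (hθ₂₁ : θ₂ < θ₁)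
    (hη : η < (1/2) * ((1 - θ₀)/(N - θ₀)) * ((θ₁ - θ₂)/(N - θ₂)))
    (hl : 0 < l)
    (h1 : ∀ i ∈ Finset.Icc 1 n, a i ≤ N * l)
    (h2 : (n : ℝ) * θ₁ * l < ∑ i ∈ Finset.Icc 1 n, a i)
    (h3 : (((Finset.Icc 1 n).filter (fun i => θ₀ * l < a i)).card : ℝ) < η * n)
    (I : Finset ℕ) (hI : I ⊆ Finset.Icc 1 n)
    (havg : (I.card : ℝ)⁻¹ * ∑ i ∈ I, a i ≤ θ₂ * l) :
    (((Finset.Icc 1 n \ I).card : ℝ))⁻¹ * ∑ i ∈ Finset.Icc 1 n \ I, a i ≤ l := by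
  set S := Icc 1 n
  have hSn : (#S : ℝ) = n := by simp [S]
  have hm : n * (θ₁ - θ₂) < #(S \ I) * (N - θ₂) := by
    have h := card_mul_sub_lt_card_sdiff_mul_sub hI h1
      (sum_le_card_mul_of_inv_card_mul_sum_le havg) (by rwa [hSn, ← mul_assoc])
    rw [hSn, ← sub_mul, ← sub_mul, ← mul_assoc, ← mul_assoc] at h
    exact lt_of_mul_lt_mul_right h hl.le
  have hB : (#((S \ I).filter (θ₀ * l < a ·)) : ℝ) < η * n :=
    (Nat.cast_le.2 (card_le_card (filter_subset_filter _ sdiff_subset))).trans_lt h3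
  have hexcess := pliss_excess_le hθ₀1 (by linarith) (by linarith) n.cast_nonneg
    (Nat.cast_nonneg _) hη hm
  refine inv_card_mul_sum_le_of_sum_le_card_mul hl.le ?_
  calc ∑ i ∈ S \ I, a i
      ≤ #(S \ I) * (θ₀ * l) + #((S \ I).filter (θ₀ * l < a ·)) * (N * l - θ₀ * l) :=
        sum_le_card_mul_add_card_filter_lt_mul fun i hi ↦ h1 i (mem_sdiff.1 hi).1
    _ ≤ #(S \ I) * (θ₀ * l) + η * n * (N - θ₀) * l := by
        rw [← sub_mul, ← mul_assoc, mul_assoc (η * n)]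
        gcongr
        exact mul_nonneg (by linarith) hl.le
    _ ≤ #(S \ I) * l := by nlinarith

/-- Key intermediate step in the proof of the variant Pliss lemma: a set on which
the average is at most `θ₂ * l` has complement with average at most `l`. -/
theorem pliss_improved_average (N θ₀ θ₁ θ₂ η l : ℝ) (n : ℕ) (a : ℕ → ℝ)
    (hN : 1 ≤ N) (hθ₀1 : θ₀ < 1) (hθ₁₀ : θ₁ < θ₀) (hθ₂₁ : θ₂ < θ₁) (hθ₂ : 0 < θ₂)
    (hη0 : 0 < η)
    (hη : η < (1/2) * ((1 - θ₀)/(N - θ₀)) * ((θ₁ - θ₂)/(N - θ₂)))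
    (hn : 1 ≤ n) (hl : 0 < l)
    (h1 : ∀ i ∈ Finset.Icc 1 n, a i ≤ N * l)
    (h2 : (n : ℝ) * θ₁ * l < ∑ i ∈ Finset.Icc 1 n, a i)
    (h3 : (((Finset.Icc 1 n).filter (fun i => θ₀ * l < a i)).card : ℝ) < η * n)
    (I : Finset ℕ) (hI : I ⊆ Finset.Icc 1 n) (hIne : I.Nonempty)
    (havg : (I.card : ℝ)⁻¹ * ∑ i ∈ I, a i ≤ θ₂ * l) :
    (((Finset.Icc 1 n \ I).card : ℝ))⁻¹ * ∑ i ∈ Finset.Icc 1 n \ I, a i ≤ l :=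
  pliss_improved_average_general N θ₀ θ₁ θ₂ η l n a hN hθ₀1 hθ₁₀ hθ₂₁ hη hl h1 h2 h3 I hI havg
end

section
/- Let (X, μ) be a probability space, f : X → X measurable, x ∈ X, E ⊆ X measurable, η > 0, and q, l, n ≥ 1 integers with n ≥ q·l. Let μ_{x,n} = (1/n)·∑_{m=0}^{n-1} δ_{f^m(x)} and let R(E, η, l, f^q) = { y : |{ 0 ≤ j ≤ l-1 : f^{qj}(y) ∈ E }| > η·l }. Then μ_{x,n}(R(E, η, l, f^q)) ≤ η⁻¹·μ_{x,n}(E) + (q·l)/(2·n·η). -/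
open MeasureTheory
open scoped Classical

/-!
Write `c(y)` for the number of `j < l` with `f^[q*j] y ∈ E`. Along the orbit of `x`,
Markov's inequality gives `η l · #{m < n : η l < c(f^m x)} ≤ ∑_{m<n} c(f^m x)`.
Swapping the sums, the `j`-th term counts the visits to `E` of the orbit segment shifted by
`q j`, which exceed the visits of the unshifted segment by at most `q j`; summing over `j < l`
costs at most `q l² / 2`.
-/

namespace Finset

theorem mul_card_filter_lt_le_sum {ι : Type*} (s : Finset ι) (g : ι → ℕ) (t : ℝ) :
    t * #{i ∈ s | t < g i} ≤ ∑ i ∈ s, (g i : ℝ) :=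
  calc t * #{i ∈ s | t < g i} = #{i ∈ s | t < g i} • t := by rw [nsmul_eq_mul, mul_comm]
    _ ≤ ∑ i ∈ s with t < g i, (g i : ℝ) :=
      card_nsmul_le_sum _ _ _ fun i hi => (mem_filter.1 hi).2.le
    _ ≤ ∑ i ∈ s, (g i : ℝ) :=
      sum_le_sum_of_subset_of_nonneg (filter_subset _ _) fun _ _ _ => Nat.cast_nonneg _

variable {p : ℕ → Prop} [DecidablePred p]

theorem card_filter_range_add_le (n k : ℕ) :
    #{m ∈ range n | p (k + m)} ≤ #{m ∈ range n | p m} + k :=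
  calc #{m ∈ range n | p (k + m)}
      ≤ #{m ∈ range k | p m} + #{m ∈ range n | p (k + m)} := Nat.le_add_left _ _
    _ = #{m ∈ range (n + k) | p m} := by simp only [card_filter, add_comm n, sum_range_add]
    _ = #{m ∈ range n | p m} + #{m ∈ range k | p (n + m)} := by
      simp only [card_filter, sum_range_add]
    _ ≤ #{m ∈ range n | p m} + k :=
      Nat.add_le_add_left ((card_filter_le _ _).trans (card_range k).le) _

theorem sum_card_filter_range_mul_add_le (q l n : ℕ) :
    ∑ m ∈ range n, #{j ∈ range l | p (q * j + m)}
      ≤ l * #{m ∈ range n | p m} + q * ∑ j ∈ range l, j :=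
  calc ∑ m ∈ range n, #{j ∈ range l | p (q * j + m)}
      = ∑ j ∈ range l, #{m ∈ range n | p (q * j + m)} := by
        simp only [card_filter]; exact sum_comm
    _ ≤ ∑ j ∈ range l, (#{m ∈ range n | p m} + q * j) :=
      sum_le_sum fun j _ => card_filter_range_add_le n (q * j)
    _ = l * #{m ∈ range n | p m} + q * ∑ j ∈ range l, j := by
      rw [sum_add_distrib, sum_const, card_range, smul_eq_mul, mul_sum]

theorem sum_card_filter_range_mul_add_le_real (q l n : ℕ) :
    ∑ m ∈ range n, (#{j ∈ range l | p (q * j + m)} : ℝ)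
      ≤ l * (#{m ∈ range n | p m} + q * l / 2) := by
  have gauss : ((∑ j ∈ range l, j : ℕ) : ℝ) ≤ l * l / 2 := by
    rw [le_div_iff₀ two_pos]
    exact_mod_cast (sum_range_id_mul_two l).trans_le (Nat.mul_le_mul_left l (Nat.sub_le l 1))
  calc ∑ m ∈ range n, (#{j ∈ range l | p (q * j + m)} : ℝ)
      ≤ ((l * #{m ∈ range n | p m} + q * ∑ j ∈ range l, j : ℕ) : ℝ) := by
        exact_mod_cast sum_card_filter_range_mul_add_le q l n
    _ ≤ l * #{m ∈ range n | p m} + q * (l * l / 2) := by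
        push_cast at gauss ⊢; gcongr
    _ = l * (#{m ∈ range n | p m} + q * l / 2) := by ring

theorem mul_card_filter_range_lt_card_le (η : ℝ) (q l n : ℕ) :
    η * #{m ∈ range n | η * l < #{j ∈ range l | p (q * j + m)}}
      ≤ #{m ∈ range n | p m} + q * l / 2 := by
  rcases l.eq_zero_or_pos with rfl | hl
  · simp
  refine le_of_mul_le_mul_left ?_ (Nat.cast_pos.2 hl : (0 : ℝ) < l)
  calc (l : ℝ) * (η * #{m ∈ range n | η * l < #{j ∈ range l | p (q * j + m)}})
      = η * l * #{m ∈ range n | η * l < #{j ∈ range l | p (q * j + m)}} := by ring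
    _ ≤ ∑ m ∈ range n, (#{j ∈ range l | p (q * j + m)} : ℝ) := mul_card_filter_lt_le_sum _ _ _
    _ ≤ l * (#{m ∈ range n | p m} + q * l / 2) := sum_card_filter_range_mul_add_le_real q l n

end Finset

theorem empirical_measure_recurrent_le_general {X : Type*}
    (f : X → X)
    (E : Set X)
    (η : ℝ) (hη : 0 < η)
    (q l n : ℕ)
    (x : X) :
    (((Finset.range n).filter (fun m => f^[m] x ∈
        {y | η * l < (((Finset.range l).filter (fun j => f^[q * j] y ∈ E)).card : ℝ)}
      )).card : ℝ) / n
      ≤ η⁻¹ * ((((Finset.range n).filter (fun m => f^[m] x ∈ E)).card : ℝ) / n)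
        + (q * l : ℝ) / (2 * n * η) := by
  have key := Finset.mul_card_filter_range_lt_card_le (p := fun m => f^[m] x ∈ E) η q l n
  simp only [Function.iterate_add_apply] at key
  simp only [Set.mem_ofPred_eq]
  calc _ = η * _ / (n * η) := by rw [mul_comm (n : ℝ), mul_div_mul_left _ _ hη.ne']
    _ ≤ _ / (n * η) := div_le_div_of_nonneg_right key (by positivity)
    _ = _ := by field_simp

/-- Empirical-measure bound for recurrent points:
`μ_{x,n}(R(E, η, l, f^q)) ≤ η⁻¹·μ_{x,n}(E) + (q·l)/(2·n·η)`, where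
`μ_{x,n}(A) = (1/n)·|{0 ≤ m ≤ n-1 : f^m(x) ∈ A}|` and
`R(E, η, l, f^q) = {y : |{0 ≤ j ≤ l-1 : f^{qj}(y) ∈ E}| > η·l}`. -/
theorem empirical_measure_recurrent_le {X : Type*} [MeasurableSpace X]
    (μ : Measure X) [IsProbabilityMeasure μ]
    (f : X → X) (hf : Measurable f)
    (E : Set X) (hE : MeasurableSet E)
    (η : ℝ) (hη : 0 < η)
    (q l n : ℕ) (hq : 1 ≤ q) (hl : 1 ≤ l) (hn : 1 ≤ n) (hnql : q * l ≤ n)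
    (x : X) :
    (((Finset.range n).filter (fun m => f^[m] x ∈
        {y | η * l < (((Finset.range l).filter (fun j => f^[q * j] y ∈ E)).card : ℝ)}
      )).card : ℝ) / n
      ≤ η⁻¹ * ((((Finset.range n).filter (fun m => f^[m] x ∈ E)).card : ℝ) / n)
        + (q * l : ℝ) / (2 * n * η) :=
  empirical_measure_recurrent_le_general f E η hη q l n x
end
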